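/- (Elastic pendulum.) On M = ℝ²_{(p,q)} × ℝ²_{(y,x)}, let Ω > 0 and γ ∈ ℝ, and let H(p,q,y,x) := (1/2)(p² + q²) + (1/2)(y² + Ω²x² + γq²x). The perturbed Hamiltonian vector field is X_H^ε = X_H^{(0)} + εX_H^{(1)} with X_H^{(0)} = −(Ω²x + (1/2)γq²)∂/∂y + y∂/∂x and X_H^{(1)} = −(1+γx)q∂/∂p + p∂/∂q. Define J := (Ω/2)(x + γq²/(2Ω²))² + y²/(2Ω) and F_ε := J + ε(γ/Ω³)pqy + ε²(γ/(4Ω³))[ γq²(x + γq²/(2Ω²))(x − 3γq²/(2Ω²)) + 4(q² − p²)(x + γq²/(2Ω²)) − (γ/Ω²)q²y² ]. Then F_ε is an approximate first integral of order 2 of X_H^ε: for every (p,q,y,x) ∈ ℝ⁴, (L_{X_H^ε}F_ε)(p,q,y,x) = O(ε³) as ε → 0; equivalently, the coefficients of ε⁰, ε¹ and ε² in the polynomial ε ↦ D(F_ε)(X_H^{(0)} + εX_H^{(1)}) vanish identically on ℝ⁴. -/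

import Mathlib

/-!
Write `F_ε = J + ε F₁ + ε² F₂`. Since `X_H^ε = X₀ + ε X₁` is affine in `ε`, the Lie derivative of
`F_ε` along it is a cubic polynomial in `ε` whose coefficients of `1, ε, ε²` are `X₀ J`,
`X₁ J + X₀ F₁` and `X₁ F₁ + X₀ F₂`. The corrections `F₁, F₂` solve exactly these homological
equations, so the Lie derivative equals `ε³ · X₁ F₂`.
-/

open Real Asymptotics

noncomputable section

/-- Phase space of the elastic pendulum: `(p, q, y, x) ∈ ℝ⁴`, slow variables
`(p,q)`, fast variables `(y,x)`. -/
abbrev EP := ℝ × ℝ × ℝ × ℝ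

/-- The adiabatic invariant `J = (Ω/2)(x + γq²/(2Ω²))² + y²/(2Ω)`. -/
def Jep (Ω γ : ℝ) (m : EP) : ℝ :=
  Ω / 2 * (m.2.2.2 + γ * m.2.1 ^ 2 / (2 * Ω ^ 2)) ^ 2 + m.2.2.1 ^ 2 / (2 * Ω)

/-- The unperturbed (fast) Hamiltonian vector field
`X_H^{(0)} = -(Ω²x + (1/2)γq²)∂/∂y + y∂/∂x`. -/
def X0ep (Ω γ : ℝ) (m : EP) : EP :=
  (0, 0, -(Ω ^ 2 * m.2.2.2 + (1 / 2) * γ * m.2.1 ^ 2), m.2.2.1)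

/-- The perturbation (slow) Hamiltonian vector field
`X_H^{(1)} = -(1+γx)q∂/∂p + p∂/∂q`. -/
def X1ep (Ω γ : ℝ) (m : EP) : EP :=
  (-((1 + γ * m.2.2.2) * m.2.1), m.1, 0, 0)

/-- The approximate first integral of second order of the elastic pendulum. -/
def Fep (Ω γ : ℝ) (ε : ℝ) (m : EP) : ℝ :=
  Jep Ω γ m + ε * (γ / Ω ^ 3) * m.1 * m.2.1 * m.2.2.1 +
    ε ^ 2 * (γ / (4 * Ω ^ 3)) *
      (γ * m.2.1 ^ 2 * (m.2.2.2 + γ * m.2.1 ^ 2 / (2 * Ω ^ 2)) *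
          (m.2.2.2 - 3 * γ * m.2.1 ^ 2 / (2 * Ω ^ 2)) +
        4 * (m.2.1 ^ 2 - m.1 ^ 2) * (m.2.2.2 + γ * m.2.1 ^ 2 / (2 * Ω ^ 2)) -
        (γ / Ω ^ 2) * m.2.1 ^ 2 * m.2.2.1 ^ 2)

namespace ElasticPendulum

variable (Ω γ : ℝ)

def Fep₁ (m : EP) : ℝ :=
  γ / Ω ^ 3 * m.1 * m.2.1 * m.2.2.1

def Fep₂ (m : EP) : ℝ :=
  γ / (4 * Ω ^ 3) *
    (γ * m.2.1 ^ 2 * (m.2.2.2 + γ * m.2.1 ^ 2 / (2 * Ω ^ 2)) *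
        (m.2.2.2 - 3 * γ * m.2.1 ^ 2 / (2 * Ω ^ 2)) +
      4 * (m.2.1 ^ 2 - m.1 ^ 2) * (m.2.2.2 + γ * m.2.1 ^ 2 / (2 * Ω ^ 2)) -
      (γ / Ω ^ 2) * m.2.1 ^ 2 * m.2.2.1 ^ 2)

theorem Fep_eq (ε : ℝ) :
    Fep Ω γ ε = Jep Ω γ + ε • Fep₁ Ω γ + ε ^ 2 • Fep₂ Ω γ := by
  ext m
  simp only [Fep, Fep₁, Fep₂, Pi.add_apply, Pi.smul_apply, smul_eq_mul]
  ring

theorem differentiable_Jep : Differentiable ℝ (Jep Ω γ) := by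
  unfold Jep; fun_prop

theorem differentiable_Fep₁ : Differentiable ℝ (Fep₁ Ω γ) := by
  unfold Fep₁; fun_prop

theorem differentiable_Fep₂ : Differentiable ℝ (Fep₂ Ω γ) := by
  unfold Fep₂; fun_prop

theorem fderiv_Jep_apply (p q y x dp dq dy dx : ℝ) :
    fderiv ℝ (Jep Ω γ) (p, q, y, x) (dp, dq, dy, dx) =
      Ω * (x + γ * q ^ 2 / (2 * Ω ^ 2)) * (dx + γ * q * dq / Ω ^ 2) + y * dy / Ω := by
  rw [← (differentiable_Jep Ω γ _).lineDeriv_eq_fderiv, lineDeriv]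
  simp only [Jep, Prod.smul_mk, Prod.mk_add_mk, smul_eq_mul]
  simp (disch := fun_prop) only [deriv_fun_add, deriv_fun_mul, deriv_fun_pow,
      deriv_div_const, deriv_id'', deriv_const']
  ring

theorem fderiv_Fep₁_apply (p q y x dp dq dy dx : ℝ) :
    fderiv ℝ (Fep₁ Ω γ) (p, q, y, x) (dp, dq, dy, dx) =
      γ / Ω ^ 3 * (dp * q * y + p * dq * y + p * q * dy) := by
  rw [← (differentiable_Fep₁ Ω γ _).lineDeriv_eq_fderiv, lineDeriv]
  simp only [Fep₁, Prod.smul_mk, Prod.mk_add_mk, smul_eq_mul]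
  simp (disch := fun_prop) only [deriv_fun_add, deriv_fun_mul, deriv_div_const, deriv_id'',
      deriv_const']
  ring

theorem fderiv_Fep₂_apply_fast (p q y x dy dx : ℝ) :
    fderiv ℝ (Fep₂ Ω γ) (p, q, y, x) (0, 0, dy, dx) =
      γ / (4 * Ω ^ 3) * ((2 * γ * q ^ 2 * (x - γ * q ^ 2 / (2 * Ω ^ 2)) +
        4 * (q ^ 2 - p ^ 2)) * dx - 2 * γ / Ω ^ 2 * q ^ 2 * y * dy) := by
  rw [← (differentiable_Fep₂ Ω γ _).lineDeriv_eq_fderiv, lineDeriv]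
  simp only [Fep₂, Prod.smul_mk, Prod.mk_add_mk, smul_eq_mul]
  simp (disch := fun_prop) only [deriv_fun_add, deriv_fun_sub, deriv_fun_mul, deriv_fun_pow,
      deriv_div_const, deriv_id'', deriv_const']
  ring

variable {Ω}

theorem fderiv_Jep_X0ep (hΩ : Ω ≠ 0) (m : EP) : fderiv ℝ (Jep Ω γ) m (X0ep Ω γ m) = 0 := by
  obtain ⟨p, q, y, x⟩ := m
  simp only [X0ep, fderiv_Jep_apply]
  field_simp
  ring

theorem fderiv_Jep_X1ep_add_fderiv_Fep₁_X0ep (hΩ : Ω ≠ 0) (m : EP) :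
    fderiv ℝ (Jep Ω γ) m (X1ep Ω γ m) + fderiv ℝ (Fep₁ Ω γ) m (X0ep Ω γ m) = 0 := by
  obtain ⟨p, q, y, x⟩ := m
  simp only [X0ep, X1ep, fderiv_Jep_apply, fderiv_Fep₁_apply]
  field_simp
  ring

theorem fderiv_Fep₁_X1ep_add_fderiv_Fep₂_X0ep (hΩ : Ω ≠ 0) (m : EP) :
    fderiv ℝ (Fep₁ Ω γ) m (X1ep Ω γ m) + fderiv ℝ (Fep₂ Ω γ) m (X0ep Ω γ m) = 0 := by
  obtain ⟨p, q, y, x⟩ := m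
  simp only [X0ep, X1ep, fderiv_Fep₁_apply, fderiv_Fep₂_apply_fast]
  field_simp
  ring

theorem fderiv_Fep_apply_X0ep_add_smul_X1ep (hΩ : Ω ≠ 0) (ε : ℝ) (m : EP) :
    fderiv ℝ (Fep Ω γ ε) m (X0ep Ω γ m + ε • X1ep Ω γ m) =
      fderiv ℝ (Fep₂ Ω γ) m (X1ep Ω γ m) * ε ^ 3 := by
  have hJ := differentiable_Jep Ω γ m
  have h₁ := differentiable_Fep₁ Ω γ m
  have h₂ := differentiable_Fep₂ Ω γ m
  rw [Fep_eq, fderiv_add (hJ.add (h₁.const_smul ε)) (h₂.const_smul _),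
    fderiv_add hJ (h₁.const_smul ε), fderiv_const_smul h₁, fderiv_const_smul h₂]
  simp only [add_apply, smul_apply, map_add, map_smul, smul_eq_mul]
  linear_combination fderiv_Jep_X0ep γ hΩ m + ε * fderiv_Jep_X1ep_add_fderiv_Fep₁_X0ep γ hΩ m +
    ε ^ 2 * fderiv_Fep₁_X1ep_add_fderiv_Fep₂_X0ep γ hΩ m

end ElasticPendulum

/-- Elastic pendulum: `F_ε` is an approximate first integral of
order 2 of `X_H^ε = X_H^{(0)} + εX_H^{(1)}`: at every point,
`L_{X_H^ε}F_ε = O(ε³)` as `ε → 0`. -/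
theorem stmt17 (Ω γ : ℝ) (hΩ : 0 < Ω) :
    ∀ m : EP,
      (fun ε : ℝ => fderiv ℝ (Fep Ω γ ε) m (X0ep Ω γ m + ε • X1ep Ω γ m))
        =O[nhds 0] fun ε : ℝ => ε ^ 3 := by
  intro m
  simp_rw [ElasticPendulum.fderiv_Fep_apply_X0ep_add_smul_X1ep γ hΩ.ne']
  exact (isBigO_refl _ _).const_mul_left _
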